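/- arXiv:1409.7115 — 2 statements merged into one kernel-verified Lean document; each statement's English description precedes it below -/
import Mathlib

section
/- Let W(x_1,...,x_n) be a quasihomogeneous polynomial with an isolated singularity at the origin, where deg(x_i) = d_i > 0, and let I ⊂ {1,...,n} be the set of indices i with d_i > 1. Then the polynomial W̃(y_1,...,y_n) = W(y_1^{d_1},...,y_n^{d_n}) has an isolated singularity at the origin if and only if for every subset J ⊂ I the restriction of W to the linear subspace {x_j = 0 for all j ∈ J} has an isolated singularity at the origin. -/
/-!
With `x = y^d`, the chain rule gives `∂ᵢW̃(y) = dᵢ yᵢ^(dᵢ-1) (∂ᵢW)(x)`, so `∂ᵢW̃(y) = 0` exactly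
when `(∂ᵢW)(x) = 0`, or `dᵢ > 1` and `xᵢ = 0`. Hence a critical point `y` of `W̃` on `W̃ = 0`
gives a critical point `x` of `W` on `ℂⁿ_J ∩ {W = 0}` for `J = {i ∈ I : xᵢ = 0}`, and conversely
such an `x` with `J ⊆ I` lifts to a critical point of `W̃` by taking `dᵢ`-th roots. As `y = 0`
iff `x = 0`, the two conditions match.
-/

open MvPolynomial

/-- `W` is quasihomogeneous of some degree with respect to the weights `d`. -/
def IsQuasiHomogeneous {n : ℕ} (W : MvPolynomial (Fin n) ℂ) (d : Fin n → ℕ) : Prop :=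
  ∃ dW : ℕ, ∀ (c : ℂ) (x : Fin n → ℂ),
    eval (fun i => c ^ (d i) * x i) W = c ^ dW * eval x W

/-- The restriction of `W` to the linear subspace `{x : x_j = 0 for j ∈ J}` has an isolated
singularity at the origin: any point of the subspace lying on the hypersurface `W = 0` at which
all partial derivatives of `W` along the subspace vanish is the origin. -/
def HasIsolatedSingularityOn {n : ℕ} (W : MvPolynomial (Fin n) ℂ) (J : Set (Fin n)) : Prop :=
  ∀ x : Fin n → ℂ, (∀ j ∈ J, x j = 0) →
    (∀ i ∉ J, eval x (pderiv i W) = 0) → eval x W = 0 → x = 0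

/-- `W` has an isolated singularity at the origin. -/
def HasIsolatedSingularity {n : ℕ} (W : MvPolynomial (Fin n) ℂ) : Prop :=
  HasIsolatedSingularityOn W (∅ : Set (Fin n))

section PowSubst

variable {σ R : Type*} [CommSemiring R]

theorem eval_aeval_X_pow (d : σ → ℕ) (p : MvPolynomial σ R) (y : σ → R) :
    eval y (aeval (fun j => (X j : MvPolynomial σ R) ^ d j) p) = eval (fun j => y j ^ d j) p := by
  rw [← coe_aeval_eq_eval, RingHom.coe_coe, comp_aeval_apply]
  simp only [map_pow, aeval_X]
  rfl

theorem pderiv_aeval_X_pow (d : σ → ℕ) (i : σ) (p : MvPolynomial σ R) :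
    pderiv i (aeval (fun j => (X j : MvPolynomial σ R) ^ d j) p) =
      (d i : MvPolynomial σ R) * X i ^ (d i - 1) *
        aeval (fun j => (X j : MvPolynomial σ R) ^ d j) (pderiv i p) := by
  induction p using MvPolynomial.induction_on with
  | C a => simp
  | add p q hp hq => simp only [map_add, hp, hq]; ring
  | mul_X p j hp =>
    simp only [map_mul, aeval_X, pderiv_mul, hp, pderiv_pow]
    rcases eq_or_ne i j with rfl | hij
    · simp only [pderiv_X_self, map_one, map_add, map_mul, aeval_X]; ring
    · simp only [pderiv_X_of_ne hij.symm, mul_zero, add_zero, map_mul, aeval_X]; ring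

theorem eval_pderiv_aeval_X_pow (d : σ → ℕ) (i : σ) (p : MvPolynomial σ R) (y : σ → R) :
    eval y (pderiv i (aeval (fun j => (X j : MvPolynomial σ R) ^ d j) p)) =
      d i * y i ^ (d i - 1) * eval (fun j => y j ^ d j) (pderiv i p) := by
  simp only [pderiv_aeval_X_pow, map_mul, map_pow, map_natCast, eval_X, eval_aeval_X_pow]

theorem eval_pderiv_aeval_X_pow_eq_zero_iff [IsDomain R] [CharZero R] {d : σ → ℕ} {i : σ}
    (hd : 0 < d i) (p : MvPolynomial σ R) (y : σ → R) :
    eval y (pderiv i (aeval (fun j => (X j : MvPolynomial σ R) ^ d j) p)) = 0 ↔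
      (1 < d i ∧ y i = 0) ∨ eval (fun j => y j ^ d j) (pderiv i p) = 0 := by
  rw [eval_pderiv_aeval_X_pow, mul_eq_zero, mul_eq_zero, Nat.cast_eq_zero, pow_eq_zero_iff',
    or_iff_right hd.ne', and_comm, show d i - 1 ≠ 0 ↔ 1 < d i by omega]

end PowSubst

theorem pow_eq_zero_pi_iff {σ M : Type*} [MonoidWithZero M] [NoZeroDivisors M] {d : σ → ℕ}
    (hd : ∀ i, 0 < d i) {y : σ → M} : (fun j => y j ^ d j) = 0 ↔ y = 0 := by
  simp only [funext_iff, Pi.zero_apply, fun j => pow_eq_zero_iff (M₀ := M) (hd j).ne']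

theorem hasIsolatedSingularityOn_of_hasIsolatedSingularity_aeval_X_pow {n : ℕ}
    {W : MvPolynomial (Fin n) ℂ} {d : Fin n → ℕ} (hd : ∀ i, 0 < d i)
    (hWt : HasIsolatedSingularity (aeval (fun i => (X i : MvPolynomial (Fin n) ℂ) ^ d i) W))
    {J : Set (Fin n)} (hJ : J ⊆ {i | 1 < d i}) : HasIsolatedSingularityOn W J := by
  intro x hxJ hder hW
  choose y hy using fun i => IsAlgClosed.exists_pow_nat_eq (x i) (hd i)
  have hx : (fun j => y j ^ d j) = x := funext hy
  rw [← hx, pow_eq_zero_pi_iff hd]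
  refine hWt y (by simp) (fun i _ => ?_) (by rw [eval_aeval_X_pow, hx, hW])
  rw [eval_pderiv_aeval_X_pow_eq_zero_iff (hd i), hx]
  by_cases hi : i ∈ J
  · exact .inl ⟨hJ hi, pow_eq_zero_iff (hd i).ne' |>.mp ((hy i).trans (hxJ i hi))⟩
  · exact .inr (hder i hi)

theorem hasIsolatedSingularity_aeval_X_pow {n : ℕ} {W : MvPolynomial (Fin n) ℂ}
    {d : Fin n → ℕ} (hd : ∀ i, 0 < d i)
    (hW : ∀ J : Set (Fin n), J ⊆ {i | 1 < d i} → HasIsolatedSingularityOn W J) :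
    HasIsolatedSingularity (aeval (fun i => (X i : MvPolynomial (Fin n) ℂ) ^ d i) W) := by
  intro y _ hder hWy
  rw [← pow_eq_zero_pi_iff hd]
  refine hW {i | 1 < d i ∧ y i = 0} (fun i hi => hi.1) _
    (fun j hj => by simp [hj.2, (hd j).ne']) (fun i hi => ?_) (by rwa [← eval_aeval_X_pow])
  have hcrit := (eval_pderiv_aeval_X_pow_eq_zero_iff (hd i) W y).mp (hder i (Set.notMem_empty i))
  exact hcrit.resolve_left hi

theorem isolated_singularity_of_cover_general {n : ℕ} (W : MvPolynomial (Fin n) ℂ)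
    (d : Fin n → ℕ) (hd : ∀ i, 0 < d i)
    (Wt : MvPolynomial (Fin n) ℂ)
    (hWt : Wt = aeval (fun i => (X i : MvPolynomial (Fin n) ℂ) ^ (d i)) W) :
    HasIsolatedSingularity Wt ↔
      ∀ J : Set (Fin n), J ⊆ {i | 1 < d i} → HasIsolatedSingularityOn W J := by
  subst hWt
  exact ⟨fun hWt _ hJ =>
    hasIsolatedSingularityOn_of_hasIsolatedSingularity_aeval_X_pow hd hWt hJ,
    hasIsolatedSingularity_aeval_X_pow hd⟩

/-- Lemma `isolated-lem` of the paper: for a quasihomogeneous polynomial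
`W(x_1,…,x_n)` with an isolated singularity, with `deg x_i = d_i > 0`, and
`W̃(y) = W(y_1^{d_1},…,y_n^{d_n})`, letting `I = {i : d_i > 1}`, the polynomial `W̃` has an
isolated singularity at the origin if and only if for every subset `J ⊆ I` the restriction
`W|_{𝔸^n_J}` has an isolated singularity at the origin. -/
theorem isolated_singularity_of_cover {n : ℕ} (W : MvPolynomial (Fin n) ℂ)
    (d : Fin n → ℕ) (hd : ∀ i, 0 < d i)
    (hquasi : IsQuasiHomogeneous W d)
    (hisol : HasIsolatedSingularity W)
    (Wt : MvPolynomial (Fin n) ℂ)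
    (hWt : Wt = aeval (fun i => (X i : MvPolynomial (Fin n) ℂ) ^ (d i)) W) :
    HasIsolatedSingularity Wt ↔
      ∀ J : Set (Fin n), J ⊆ {i | 1 < d i} → HasIsolatedSingularityOn W J :=
  isolated_singularity_of_cover_general W d hd Wt hWt
end

section
/- Let E be a ℤ-graded matrix factorization of 0 over a base S with trivial 𝔾_m-action, decomposed by weights as E_b = ⊕_i E_{b,i} (b ∈ {0,1}), and let mf be the folding functor sending a bounded complex C^• of vector bundles to the matrix factorization with even part ⊕_n C^{2n}{−nd} and odd part ⊕_n C^{2n−1}{−nd}. Let com_0(E) be the complex ... → E_{1,0} → E_{0,0} → E_{1,d} → ... extracted from the weight-graded pieces. Then mf is left adjoint to com_0: there is a natural isomorphism Hom(mf(C^•), F) ≅ Hom(C^•, com_0(F)) of complexes. -/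
open CategoryTheory

noncomputable section

universe u

variable (R : Type u) [CommRing R] (d : ℤ)
  (F0 F1 : ℤ → Type u)
  [∀ w, AddCommGroup (F0 w)] [∀ w, AddCommGroup (F1 w)]
  [∀ w, Module R (F0 w)] [∀ w, Module R (F1 w)]
  (δ0 : ∀ w : ℤ, F0 w →ₗ[R] F1 (w + d)) (δ1 : ∀ w : ℤ, F1 w →ₗ[R] F0 w)
  (C : ℤ → Type u) [∀ j, AddCommGroup (C j)] [∀ j, Module R (C j)]
  (dC : ∀ j : ℤ, C j →ₗ[R] C (j + 1))

/-- The "folded" family of a weight-graded matrix factorization `F = (F0, F1, δ0, δ1)` of `0`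
of weight `d`: `Ffold m w` is the target of the degree-`m` component of a `Hom` of internal
weight `w`; for even `m` it is `F0(w + d·m/2)`, for odd `m` it is `F1(w + d·(m+1)/2)`.
In particular `com₀(F)` is the complex `j ↦ Ffold j 0`, i.e.
`⋯ → F1_{,0} → F0_{,0} → F1_{,d} → ⋯` with `F0_{,0}` in degree `0`. -/
def Ffold (m w : ℤ) : ModuleCat.{u} R :=
  if m % 2 = 0 then ModuleCat.of R (F0 (w + d * (m / 2)))
  else ModuleCat.of R (F1 (w + d * ((m + 1) / 2)))

/-- The differential `Ffold m w ⟶ Ffold (m+1) w` induced by `δ0` and `δ1`. -/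
def FfoldD (m w : ℤ) : Ffold R d F0 F1 m w ⟶ Ffold R d F0 F1 (m + 1) w :=
  if h : m % 2 = 0 then
    eqToHom (by simp only [Ffold, if_pos h]) ≫
      ModuleCat.ofHom (δ0 (w + d * (m / 2))) ≫
      eqToHom (by
        have hq : (m + 1 + 1) / 2 = m / 2 + 1 := by omega
        have hidx : w + d * (m / 2) + d = w + d * ((m + 1 + 1) / 2) := by rw [hq]; ring
        rw [hidx]
        simp only [Ffold, if_neg (show ¬((m + 1) % 2 = 0) by omega)])
  else
    eqToHom (by simp only [Ffold, if_neg h]) ≫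
      ModuleCat.ofHom (δ1 (w + d * ((m + 1) / 2))) ≫
      eqToHom (by
        simp only [Ffold, if_pos (show (m + 1) % 2 = 0 by omega)])

/-- The even part of the folding `mf(C)` of a bounded complex `C`: as a weight-graded bundle,
`mf(C)₀ = ⊕_n C^{2n}{-nd}`, whose piece of weight `w` is `C^{2(w/d)}` if `d ∣ w` and `0`
otherwise. -/
def MfZero (w : ℤ) : ModuleCat.{u} R :=
  if d ∣ w then ModuleCat.of R (C (2 * (w / d))) else ModuleCat.of R (PUnit : Type u)

/-- The odd part of the folding `mf(C)`: `mf(C)₁ = ⊕_n C^{2n-1}{-nd}`. -/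
def MfOne (w : ℤ) : ModuleCat.{u} R :=
  if d ∣ w then ModuleCat.of R (C (2 * (w / d) - 1)) else ModuleCat.of R (PUnit : Type u)

/-- The component `δ₁ : mf(C)₁ → mf(C)₀` of the matrix factorization `mf(C)` of `0`,
given by the differential of `C`. -/
def MfD1 (w : ℤ) : MfOne R d C w ⟶ MfZero R d C w :=
  if h : d ∣ w then
    eqToHom (by simp only [MfOne, if_pos h]) ≫
      ModuleCat.ofHom (dC (2 * (w / d) - 1)) ≫
      eqToHom (by
        have : 2 * (w / d) - 1 + 1 = 2 * (w / d) := by omega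
        rw [this]
        simp only [MfZero, if_pos h])
  else 0

/-- The component `δ₀ : mf(C)₀ → mf(C)₁{d}` of the matrix factorization `mf(C)` of `0`. -/
def MfD0 (hd : 0 < d) (w : ℤ) : MfZero R d C w ⟶ MfOne R d C (w + d) :=
  if h : d ∣ w then
    eqToHom (by simp only [MfZero, if_pos h]) ≫
      ModuleCat.ofHom (dC (2 * (w / d))) ≫
      eqToHom (by
        have hdvd : d ∣ w + d := (dvd_add h (dvd_refl d))
        have hq : (w + d) / d = w / d + 1 := by
          obtain ⟨c, rfl⟩ := h
          rw [show d * c + d = d * (c + 1) by ring,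
            Int.mul_ediv_cancel_left _ (by omega : d ≠ 0),
            Int.mul_ediv_cancel_left _ (by omega : d ≠ 0)]
        have : 2 * (w / d) + 1 = 2 * ((w + d) / d) - 1 := by rw [hq]; ring
        rw [this]
        simp only [MfOne, if_pos hdvd])
  else 0

/-- The degree-`m` component of the `2`-periodic `Hom`-complex `Hom(mf(C), F)` in the category
of weight-graded matrix factorizations of `0`:  for `m = 2n` it is
`Hom(mf(C)₀, F₀{dn}) ⊕ Hom(mf(C)₁, F₁{dn})`, for `m = 2n+1` it is
`Hom(mf(C)₀, F₁{d(n+1)}) ⊕ Hom(mf(C)₁, F₀{dn})`; uniformly, weight-`0` (i.e.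
`𝔾ₘ`-invariant) maps `mf(C)₀ → Ffold m ·` and `mf(C)₁ → Ffold (m-1) ·`. -/
abbrev HomMF (m : ℤ) : Type u :=
  (∀ w : ℤ, MfZero R d C w ⟶ Ffold R d F0 F1 m w) ×
    (∀ w : ℤ, MfOne R d C w ⟶ Ffold R d F0 F1 (m - 1) w)

/-- The gluing isomorphism `Ffold (m-1) (w+d) = Ffold (m+1) w`. -/
theorem Ffold_glue (m w : ℤ) :
    Ffold R d F0 F1 (m - 1) (w + d) = Ffold R d F0 F1 (m + 1) w := by
  by_cases h : (m - 1) % 2 = 0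
  · have h' : ¬((m + 1) % 2 ≠ 0) := by omega
    have hq : (m + 1) / 2 = (m - 1) / 2 + 1 := by omega
    have hidx : w + d + d * ((m - 1) / 2) = w + d * ((m + 1) / 2) := by rw [hq]; ring
    simp only [Ffold, if_pos h, if_pos (show (m + 1) % 2 = 0 by omega)]
    rw [hidx]
  · have hq : (m + 1 + 1) / 2 = (m - 1 + 1) / 2 + 1 := by omega
    have hidx : w + d + d * ((m - 1 + 1) / 2) = w + d * ((m + 1 + 1) / 2) := by rw [hq]; ring
    simp only [Ffold, if_neg h, if_neg (show ¬((m + 1) % 2 = 0) by omega)]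
    rw [hidx]

/-- The differential of the `Hom`-complex `Hom(mf(C), F)`, `f ↦ δ_F ∘ f - (-1)^m f ∘ δ_{mf(C)}`. -/
def HomMFD (hd : 0 < d) (m : ℤ) (f : HomMF R d F0 F1 C m) : HomMF R d F0 F1 C (m + 1) :=
  ⟨fun w =>
      f.1 w ≫ FfoldD R d F0 F1 δ0 δ1 m w -
        (Int.negOnePow m : ℤ) •
          (MfD0 R d C dC hd w ≫ f.2 (w + d) ≫ eqToHom (Ffold_glue R d F0 F1 m w)),
    fun w =>
      (f.2 w ≫ FfoldD R d F0 F1 δ0 δ1 (m - 1) w ≫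
          eqToHom (by rw [show m - 1 + 1 = m + 1 - 1 by omega])) -
        (Int.negOnePow m : ℤ) •
          (MfD1 R d C dC w ≫ f.1 w ≫
            eqToHom (congrArg (fun t => Ffold R d F0 F1 t w) (by omega : m = m + 1 - 1)))⟩

/-- The degree-`m` component of the `Hom`-complex `Hom(C, com₀(F))` of complexes, where
`com₀(F)` is the complex `j ↦ Ffold j 0`, i.e. `⋯ → F1_{,0} → F0_{,0} → F1_{,d} → ⋯`
extracted from the weight-graded pieces of `F`. -/
abbrev HomCx (m : ℤ) : Type u :=
  ∀ j : ℤ, ModuleCat.of R (C j) ⟶ Ffold R d F0 F1 (j + m) 0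

/-- The differential of the `Hom`-complex `Hom(C, com₀(F))`,
`f ↦ d_{com₀(F)} ∘ f - (-1)^m f ∘ d_C`. -/
def HomCxD (m : ℤ) (f : HomCx R d F0 F1 C m) : HomCx R d F0 F1 C (m + 1) :=
  fun j =>
    f j ≫ FfoldD R d F0 F1 δ0 δ1 (j + m) 0 ≫
        eqToHom (by rw [show j + m + 1 = j + (m + 1) by ring]) -
      (Int.negOnePow m : ℤ) •
        (ModuleCat.ofHom (dC j) ≫ f (j + 1) ≫
          eqToHom (by rw [show j + 1 + m = j + (m + 1) by ring]))


/-! The pieces of `mf(C)` of weight `d * n` are `C^{2n}` (even part) and `C^{2n-1}` (odd part), and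
all other pieces vanish, so a degree-`m` map `mf(C) → F` amounts to its components
`C^{2n} → Ffold m (d n)` and `C^{2n-1} → Ffold (m-1) (d n)`. By the `2`-periodicity
`Ffold m (w + d n) = Ffold (m + 2n) w`, both land in `Ffold (j + m) 0 = com₀(F)^{j+m}` for
`j = 2n`, resp. `j = 2n - 1`, which is exactly a degree-`m` map `C → com₀(F)`. The folded
differential `FfoldD` is periodic in the same way, so postcomposition with `δ_F` matches
postcomposition with the differential of `com₀(F)`, while precomposition with `δ_{mf(C)}` is
precomposition with `d_C` by construction. -/

section Adjunction

variable {R d F0 F1 C}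

theorem Ffold_periodic {m w m' w' n : ℤ} (hm : m' = m + 2 * n) (hw : w = w' + d * n) :
    Ffold R d F0 F1 m w = Ffold R d F0 F1 m' w' := by
  subst hm hw
  by_cases h : m % 2 = 0
  · simp only [Ffold, if_pos h, if_pos (show (m + 2 * n) % 2 = 0 by omega)]
    rw [show (m + 2 * n) / 2 = m / 2 + n by omega, mul_add, add_comm (d * _), add_assoc]
  · simp only [Ffold, if_neg h, if_neg (show ¬(m + 2 * n) % 2 = 0 by omega)]
    rw [show (m + 2 * n + 1) / 2 = (m + 1) / 2 + n by omega, mul_add, add_comm (d * _),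
      add_assoc]

theorem FfoldD_periodic {m w m' w' n : ℤ} (hm : m' = m + 2 * n) (hw : w = w' + d * n) :
    FfoldD R d F0 F1 δ0 δ1 m w =
      eqToHom (Ffold_periodic hm hw) ≫ FfoldD R d F0 F1 δ0 δ1 m' w' ≫
        eqToHom (Ffold_periodic (by omega) hw).symm := by
  subst hm hw
  by_cases h : m % 2 = 0
  · simp only [FfoldD, dif_pos h, dif_pos (show (m + 2 * n) % 2 = 0 by omega)]
    rw [dcongr_arg (fun i => ModuleCat.ofHom (δ0 i))
      (show w' + d * n + d * (m / 2) = w' + d * ((m + 2 * n) / 2) by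
        rw [show (m + 2 * n) / 2 = m / 2 + n by omega]; ring)]
    simp only [Category.assoc, eqToHom_trans, eqToHom_trans_assoc]
  · simp only [FfoldD, dif_neg h, dif_neg (show ¬(m + 2 * n) % 2 = 0 by omega)]
    rw [dcongr_arg (fun i => ModuleCat.ofHom (δ1 i))
      (show w' + d * n + d * ((m + 1) / 2) = w' + d * ((m + 2 * n + 1) / 2) by
        rw [show (m + 2 * n + 1) / 2 = (m + 1) / 2 + n by omega]; ring)]
    simp only [Category.assoc, eqToHom_trans, eqToHom_trans_assoc]

theorem MfZero_mul (hd : d ≠ 0) {n j : ℤ} (hj : 2 * n = j) :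
    MfZero R d C (d * n) = ModuleCat.of R (C j) := by
  rw [MfZero, if_pos (dvd_mul_right d n), Int.mul_ediv_cancel_left n hd, hj]

theorem MfOne_mul (hd : d ≠ 0) {n j : ℤ} (hj : 2 * n - 1 = j) :
    MfOne R d C (d * n) = ModuleCat.of R (C j) := by
  rw [MfOne, if_pos (dvd_mul_right d n), Int.mul_ediv_cancel_left n hd, hj]

theorem MfZero_isZero {w : ℤ} (h : ¬d ∣ w) : Limits.IsZero (MfZero R d C w) := by
  rw [MfZero, if_neg h]
  exact ModuleCat.isZero_of_subsingleton _

theorem MfOne_isZero {w : ℤ} (h : ¬d ∣ w) : Limits.IsZero (MfOne R d C w) := by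
  rw [MfOne, if_neg h]
  exact ModuleCat.isZero_of_subsingleton _

def homCxOfHomMF (hd : d ≠ 0) (m : ℤ) (f : HomMF R d F0 F1 C m) : HomCx R d F0 F1 C m :=
  fun j =>
    if hj : j % 2 = 0 then
      eqToHom (MfZero_mul hd (by omega)).symm ≫ f.1 (d * (j / 2)) ≫
        eqToHom (Ffold_periodic (by omega) (zero_add _).symm)
    else
      eqToHom (MfOne_mul hd (by omega)).symm ≫ f.2 (d * ((j + 1) / 2)) ≫
        eqToHom (Ffold_periodic (by omega) (zero_add _).symm)

def homMFOfHomCx (m : ℤ) (g : HomCx R d F0 F1 C m) : HomMF R d F0 F1 C m :=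
  ⟨fun w =>
    if h : d ∣ w then
      eqToHom (by rw [MfZero, if_pos h]) ≫ g (2 * (w / d)) ≫
        eqToHom (Ffold_periodic (by ring) (by rw [zero_add, Int.mul_ediv_cancel' h])).symm
    else 0,
  fun w =>
    if h : d ∣ w then
      eqToHom (by rw [MfOne, if_pos h]) ≫ g (2 * (w / d) - 1) ≫
        eqToHom (Ffold_periodic (by ring) (by rw [zero_add, Int.mul_ediv_cancel' h])).symm
    else 0⟩

theorem homMFOfHomCx_homCxOfHomMF (hd : d ≠ 0) (m : ℤ) (f : HomMF R d F0 F1 C m) :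
    homMFOfHomCx m (homCxOfHomMF hd m f) = f := by
  refine Prod.ext (funext fun w => ?_) (funext fun w => ?_) <;> by_cases h : d ∣ w
  · have hw : d * (2 * (w / d) / 2) = w := by
      rw [Int.mul_ediv_cancel_left _ two_ne_zero, Int.mul_ediv_cancel' h]
    simp only [homMFOfHomCx, homCxOfHomMF, dif_pos h, dif_pos (Int.mul_emod_right 2 (w / d)),
      dcongr_arg f.1 hw, Category.assoc, eqToHom_trans, eqToHom_trans_assoc, eqToHom_refl,
      Category.id_comp, Category.comp_id]
  · exact (MfZero_isZero h).eq_of_src _ _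
  · have hodd : ¬(2 * (w / d) - 1) % 2 = 0 := by omega
    have hw : d * ((2 * (w / d) - 1 + 1) / 2) = w := by
      rw [sub_add_cancel, Int.mul_ediv_cancel_left _ two_ne_zero, Int.mul_ediv_cancel' h]
    simp only [homMFOfHomCx, homCxOfHomMF, dif_pos h, dif_neg hodd,
      dcongr_arg f.2 hw, Category.assoc, eqToHom_trans, eqToHom_trans_assoc, eqToHom_refl,
      Category.id_comp, Category.comp_id]
  · exact (MfOne_isZero h).eq_of_src _ _

theorem homCxOfHomMF_homMFOfHomCx (hd : d ≠ 0) (m : ℤ) (g : HomCx R d F0 F1 C m) :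
    homCxOfHomMF hd m (homMFOfHomCx m g) = g := by
  funext j
  by_cases hj : j % 2 = 0
  · have hdeg : 2 * (d * (j / 2) / d) = j := by rw [Int.mul_ediv_cancel_left _ hd]; omega
    simp only [homMFOfHomCx, homCxOfHomMF, dif_pos hj, dif_pos (dvd_mul_right d (j / 2)),
      dcongr_arg g hdeg, Category.assoc, eqToHom_trans, eqToHom_trans_assoc, eqToHom_refl,
      Category.id_comp, Category.comp_id]
  · have hdeg : 2 * (d * ((j + 1) / 2) / d) - 1 = j := by
      rw [Int.mul_ediv_cancel_left _ hd]; omega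
    simp only [homMFOfHomCx, homCxOfHomMF, dif_neg hj, dif_pos (dvd_mul_right d ((j + 1) / 2)),
      dcongr_arg g hdeg, Category.assoc, eqToHom_trans, eqToHom_trans_assoc, eqToHom_refl,
      Category.id_comp, Category.comp_id]

def homMFEquivHomCx (hd : d ≠ 0) (m : ℤ) : HomMF R d F0 F1 C m ≃ₗ[R] HomCx R d F0 F1 C m where
  toFun := homCxOfHomMF hd m
  invFun := homMFOfHomCx m
  map_add' f g := by
    funext j
    by_cases hj : j % 2 = 0
    · simp only [homCxOfHomMF, dif_pos hj, Pi.add_apply, Prod.fst_add, Preadditive.add_comp,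
        Preadditive.comp_add]
    · simp only [homCxOfHomMF, dif_neg hj, Pi.add_apply, Prod.snd_add, Preadditive.add_comp,
        Preadditive.comp_add]
  map_smul' c f := by
    funext j
    by_cases hj : j % 2 = 0
    · simp only [homCxOfHomMF, dif_pos hj, Pi.smul_apply, Prod.smul_fst, Linear.smul_comp,
        Linear.comp_smul, RingHom.id_apply]
    · simp only [homCxOfHomMF, dif_neg hj, Pi.smul_apply, Prod.smul_snd, Linear.smul_comp,
        Linear.comp_smul, RingHom.id_apply]
  left_inv := homMFOfHomCx_homCxOfHomMF hd m
  right_inv := homCxOfHomMF_homMFOfHomCx hd m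

def homMFPostcompD (m : ℤ) (f : HomMF R d F0 F1 C m) : HomMF R d F0 F1 C (m + 1) :=
  ⟨fun w => f.1 w ≫ FfoldD R d F0 F1 δ0 δ1 m w,
    fun w => f.2 w ≫ FfoldD R d F0 F1 δ0 δ1 (m - 1) w ≫
      eqToHom (by rw [show m - 1 + 1 = m + 1 - 1 by omega])⟩

def homMFPrecompD (hd : 0 < d) (m : ℤ) (f : HomMF R d F0 F1 C m) : HomMF R d F0 F1 C (m + 1) :=
  ⟨fun w => MfD0 R d C dC hd w ≫ f.2 (w + d) ≫ eqToHom (Ffold_glue R d F0 F1 m w),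
    fun w => MfD1 R d C dC w ≫ f.1 w ≫
      eqToHom (congrArg (fun t => Ffold R d F0 F1 t w) (by omega : m = m + 1 - 1))⟩

theorem HomMFD_eq (hd : 0 < d) (m : ℤ) (f : HomMF R d F0 F1 C m) :
    HomMFD R d F0 F1 δ0 δ1 C dC hd m f =
      homMFPostcompD δ0 δ1 m f - (m.negOnePow : ℤ) • homMFPrecompD dC hd m f :=
  rfl

def homCxPostcompD (m : ℤ) (g : HomCx R d F0 F1 C m) : HomCx R d F0 F1 C (m + 1) :=
  fun j => g j ≫ FfoldD R d F0 F1 δ0 δ1 (j + m) 0 ≫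
    eqToHom (by rw [show j + m + 1 = j + (m + 1) by ring])

def homCxPrecompD (m : ℤ) (g : HomCx R d F0 F1 C m) : HomCx R d F0 F1 C (m + 1) :=
  fun j => ModuleCat.ofHom (dC j) ≫ g (j + 1) ≫
    eqToHom (by rw [show j + 1 + m = j + (m + 1) by ring])

theorem HomCxD_eq (m : ℤ) (g : HomCx R d F0 F1 C m) :
    HomCxD R d F0 F1 δ0 δ1 C dC m g =
      homCxPostcompD δ0 δ1 m g - (m.negOnePow : ℤ) • homCxPrecompD dC m g :=
  rfl

theorem homCxOfHomMF_postcompD (hd : d ≠ 0) (m : ℤ) (f : HomMF R d F0 F1 C m) :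
    homCxOfHomMF hd (m + 1) (homMFPostcompD δ0 δ1 m f) =
      homCxPostcompD δ0 δ1 m (homCxOfHomMF hd m f) := by
  funext j
  by_cases hj : j % 2 = 0
  · simp only [homCxOfHomMF, homMFPostcompD, homCxPostcompD, dif_pos hj, Category.assoc,
      FfoldD_periodic δ0 δ1 (m := m) (w := d * (j / 2)) (m' := j + m) (w' := 0) (by omega)
        (zero_add _).symm,
      eqToHom_trans]
  · simp only [homCxOfHomMF, homMFPostcompD, homCxPostcompD, dif_neg hj, Category.assoc,
      FfoldD_periodic δ0 δ1 (m := m - 1) (w := d * ((j + 1) / 2)) (m' := j + m) (w' := 0)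
        (by omega) (zero_add _).symm, eqToHom_trans]

theorem homCxOfHomMF_precompD (hd : 0 < d) (m : ℤ) (f : HomMF R d F0 F1 C m) :
    homCxOfHomMF hd.ne' (m + 1) (homMFPrecompD dC hd m f) =
      homCxPrecompD dC m (homCxOfHomMF hd.ne' m f) := by
  funext j
  by_cases hj : j % 2 = 0
  · have hdeg : 2 * (d * (j / 2) / d) = j := by rw [Int.mul_ediv_cancel_left _ hd.ne']; omega
    have hw : d * (j / 2) + d = d * ((j + 1 + 1) / 2) := by
      rw [show (j + 1 + 1) / 2 = j / 2 + 1 by omega]; ring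
    simp only [homCxOfHomMF, homMFPrecompD, homCxPrecompD, dif_pos hj,
      dif_neg (show ¬(j + 1) % 2 = 0 by omega), MfD0, dif_pos (dvd_mul_right d (j / 2)),
      dcongr_arg (fun i => ModuleCat.ofHom (dC i)) hdeg, dcongr_arg f.2 hw, Category.assoc,
      eqToHom_trans, eqToHom_trans_assoc, eqToHom_refl, Category.id_comp]
  · have hdeg : 2 * (d * ((j + 1) / 2) / d) - 1 = j := by
      rw [Int.mul_ediv_cancel_left _ hd.ne']; omega
    simp only [homCxOfHomMF, homMFPrecompD, homCxPrecompD, dif_neg hj,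
      dif_pos (show (j + 1) % 2 = 0 by omega), MfD1, dif_pos (dvd_mul_right d ((j + 1) / 2)),
      dcongr_arg (fun i => ModuleCat.ofHom (dC i)) hdeg, Category.assoc,
      eqToHom_trans, eqToHom_trans_assoc, eqToHom_refl, Category.id_comp]

theorem homMFEquivHomCx_HomMFD (hd : 0 < d) (m : ℤ) (f : HomMF R d F0 F1 C m) :
    homMFEquivHomCx hd.ne' (m + 1) (HomMFD R d F0 F1 δ0 δ1 C dC hd m f) =
      HomCxD R d F0 F1 δ0 δ1 C dC m (homMFEquivHomCx hd.ne' m f) := by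
  rw [HomMFD_eq, HomCxD_eq, map_sub, map_zsmul]
  exact congrArg₂ (fun a b => a - (m.negOnePow : ℤ) • b)
    (homCxOfHomMF_postcompD δ0 δ1 hd.ne' m f) (homCxOfHomMF_precompD dC hd m f)

end Adjunction

theorem mf_left_adjoint_com0
    (hd : 0 < d) :
    ∃ e : ∀ m : ℤ, HomMF R d F0 F1 C m ≃ₗ[R] HomCx R d F0 F1 C m,
      ∀ (m : ℤ) (f : HomMF R d F0 F1 C m),
        e (m + 1) (HomMFD R d F0 F1 δ0 δ1 C dC hd m f) =
          HomCxD R d F0 F1 δ0 δ1 C dC m (e m f) :=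
  ⟨homMFEquivHomCx hd.ne', homMFEquivHomCx_HomMFD δ0 δ1 dC hd⟩
end
end
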